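/- arXiv:1011.2952 — 2 statements merged into one kernel-verified Lean document; each statement's English description precedes it below -/
import Mathlib

section
/- Let W ⊆ ℝⁿ be an open neighborhood of 0, f : ℝⁿ → ℝⁿ continuously differentiable with f(0) = 0, and h : ℝⁿ → ℝᵖ continuous with h(0) = 0. Assume that for every x₀ ∈ W the initial value problem ẋ = f(x), x(0) = x₀ has a unique solution φ(·, x₀) : [0, ∞) → W that satisfies φ(t, x₀) → 0 as t → ∞ and for which t ↦ ‖h(φ(t, x₀))‖² is integrable on [0, ∞). Define the observability energy L_o(x₀) = ½ ∫₀^∞ ‖h(φ(t, x₀))‖² dt. If Λ : W → ℝ is continuously differentiable, Λ(0) = 0, and ⟨∇Λ(x), f(x)⟩ + ½‖h(x)‖² = 0 for all x ∈ W, then Λ(x₀) = L_o(x₀) for every x₀ ∈ W. In other words, L_o is the unique C¹ solution of this Hamilton–Jacobi equation on W vanishing at the origin. -/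
/-!
Along a trajectory `γ` of `ẋ = f(x)` the Hamilton–Jacobi equation says exactly that
`t ↦ Λ(γ t)` decreases at rate `½‖h(γ t)‖²`. Integrating over `[0, ∞)` and using
`Λ(γ t) → Λ 0 = 0` gives `Λ(x₀) = ½ ∫₀^∞ ‖h(γ t)‖² dt`.
-/

open MeasureTheory Filter Set Topology RealInnerProductSpace

section

variable {E : Type*} [NormedAddCommGroup E] [InnerProductSpace ℝ E] [CompleteSpace E]

theorem HasGradientAt.comp_hasDerivAt {V : E → ℝ} {V' v : E} {γ : ℝ → E} {t : ℝ}
    (hV : HasGradientAt V V' (γ t)) (hγ : HasDerivAt γ v t) :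
    HasDerivAt (fun s => V (γ s)) ⟪V', v⟫ t := by
  have := hV.hasFDerivAt.comp_hasDerivAt t hγ
  rwa [InnerProductSpace.toDual_apply_apply] at this

theorem apply_eq_add_integral_Ioi_of_inner_gradient_eq_neg {W : Set E} {F : E → E}
    {V : E → ℝ} {V' : E → E} {ℓ : E → ℝ} {γ : ℝ → E} {a : E}
    (hV : ∀ x ∈ W, HasGradientAt V (V' x) x) (hVF : ∀ x ∈ W, ⟪V' x, F x⟫ = -ℓ x)
    (hγW : ∀ t ≥ (0 : ℝ), γ t ∈ W) (hγ : ∀ t ≥ (0 : ℝ), HasDerivAt γ (F (γ t)) t)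
    (ha : a ∈ W) (hγa : Tendsto γ atTop (𝓝 a))
    (hℓ : IntegrableOn (fun t => ℓ (γ t)) (Ioi 0)) :
    V (γ 0) = V a + ∫ t in Ioi (0 : ℝ), ℓ (γ t) := by
  have hderiv : ∀ t ∈ Ici (0 : ℝ), HasDerivAt (fun s => V (γ s)) (-ℓ (γ t)) t := fun t ht => by
    simpa only [hVF _ (hγW t ht)] using (hV _ (hγW t ht)).comp_hasDerivAt (hγ t ht)
  have hlim : Tendsto (fun t => V (γ t)) atTop (𝓝 (V a)) :=
    (hV a ha).differentiableAt.continuousAt.tendsto.comp hγa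
  have hFTC := integral_Ioi_of_hasDerivAt_of_tendsto' hderiv hℓ.neg hlim
  rw [integral_neg] at hFTC
  linarith

end

theorem hamilton_jacobi_observability_energy_unique_general {n p : ℕ}
    (W : Set (EuclideanSpace ℝ (Fin n))) (hW0 : (0 : _) ∈ W)
    (f : EuclideanSpace ℝ (Fin n) → EuclideanSpace ℝ (Fin n))
    (h : EuclideanSpace ℝ (Fin n) → EuclideanSpace ℝ (Fin p))
    (φ : ℝ → EuclideanSpace ℝ (Fin n) → EuclideanSpace ℝ (Fin n))
    (hφ0 : ∀ x₀ ∈ W, φ 0 x₀ = x₀)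
    (hφW : ∀ x₀ ∈ W, ∀ t ≥ (0 : ℝ), φ t x₀ ∈ W)
    (hφode : ∀ x₀ ∈ W, ∀ t ≥ (0 : ℝ), HasDerivAt (fun s => φ s x₀) (f (φ t x₀)) t)
    (hφlim : ∀ x₀ ∈ W, Tendsto (fun t => φ t x₀) atTop (nhds 0))
    (hφint : ∀ x₀ ∈ W, IntegrableOn (fun t => ‖h (φ t x₀)‖ ^ 2) (Set.Ioi (0 : ℝ)))
    (Λ : EuclideanSpace ℝ (Fin n) → ℝ)
    (Λ' : EuclideanSpace ℝ (Fin n) → EuclideanSpace ℝ (Fin n))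
    (hΛgrad : ∀ x ∈ W, HasGradientAt Λ (Λ' x) x)
    (hΛ0 : Λ 0 = 0)
    (hHJ : ∀ x ∈ W, ⟪Λ' x, f x⟫ + (1 / 2 : ℝ) * ‖h x‖ ^ 2 = 0) :
    ∀ x₀ ∈ W, Λ x₀ = (1 / 2 : ℝ) * ∫ t in Set.Ioi (0 : ℝ), ‖h (φ t x₀)‖ ^ 2 := by
  intro x₀ hx₀
  have hHJ' : ∀ x ∈ W, ⟪Λ' x, f x⟫ = -((1 / 2 : ℝ) * ‖h x‖ ^ 2) := fun x hx => by
    linarith [hHJ x hx]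
  have := apply_eq_add_integral_Ioi_of_inner_gradient_eq_neg hΛgrad hHJ' (hφW x₀ hx₀)
    (hφode x₀ hx₀) hW0 (hφlim x₀ hx₀) ((hφint x₀ hx₀).const_mul _)
  rwa [hφ0 x₀ hx₀, hΛ0, zero_add, integral_const_mul] at this

/-- Uniqueness of the observability-energy solution of the Hamilton–Jacobi equation:
if every initial state `x₀ ∈ W` gives rise to a unique solution `φ(·, x₀)` of `ẋ = f(x)`
staying in `W`, converging to `0`, and with integrable output energy, and if `Λ` is `C¹`
on `W` (with gradient `Λ'`), vanishes at `0`, and satisfies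
`⟪∇Λ(x), f(x)⟫ + ½‖h(x)‖² = 0` on `W`, then `Λ` equals the observability energy
`L_o(x₀) = ½ ∫₀^∞ ‖h(φ(t, x₀))‖² dt` on `W`. -/
theorem hamilton_jacobi_observability_energy_unique {n p : ℕ}
    (W : Set (EuclideanSpace ℝ (Fin n))) (hWopen : IsOpen W) (hW0 : (0 : _) ∈ W)
    (f : EuclideanSpace ℝ (Fin n) → EuclideanSpace ℝ (Fin n))
    (hf : ContDiff ℝ 1 f) (hf0 : f 0 = 0)
    (h : EuclideanSpace ℝ (Fin n) → EuclideanSpace ℝ (Fin p))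
    (hh : Continuous h) (hh0 : h 0 = 0)
    (φ : ℝ → EuclideanSpace ℝ (Fin n) → EuclideanSpace ℝ (Fin n))
    (hφ0 : ∀ x₀ ∈ W, φ 0 x₀ = x₀)
    (hφW : ∀ x₀ ∈ W, ∀ t ≥ (0 : ℝ), φ t x₀ ∈ W)
    (hφode : ∀ x₀ ∈ W, ∀ t ≥ (0 : ℝ), HasDerivAt (fun s => φ s x₀) (f (φ t x₀)) t)
    (hφlim : ∀ x₀ ∈ W, Tendsto (fun t => φ t x₀) atTop (nhds 0))
    (hφint : ∀ x₀ ∈ W, IntegrableOn (fun t => ‖h (φ t x₀)‖ ^ 2) (Set.Ioi (0 : ℝ)))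
    (hφuniq : ∀ x₀ ∈ W, ∀ ψ : ℝ → EuclideanSpace ℝ (Fin n), ψ 0 = x₀ →
      (∀ t ≥ (0 : ℝ), ψ t ∈ W) → (∀ t ≥ (0 : ℝ), HasDerivAt ψ (f (ψ t)) t) →
      ∀ t ≥ (0 : ℝ), ψ t = φ t x₀)
    (Λ : EuclideanSpace ℝ (Fin n) → ℝ)
    (Λ' : EuclideanSpace ℝ (Fin n) → EuclideanSpace ℝ (Fin n))
    (hΛgrad : ∀ x ∈ W, HasGradientAt Λ (Λ' x) x)
    (hΛ'cont : ContinuousOn Λ' W)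
    (hΛ0 : Λ 0 = 0)
    (hHJ : ∀ x ∈ W, ⟪Λ' x, f x⟫ + (1 / 2 : ℝ) * ‖h x‖ ^ 2 = 0) :
    ∀ x₀ ∈ W, Λ x₀ = (1 / 2 : ℝ) * ∫ t in Set.Ioi (0 : ℝ), ‖h (φ t x₀)‖ ^ 2 :=
  hamilton_jacobi_observability_energy_unique_general W hW0 f h φ hφ0 hφW hφode hφlim hφint Λ Λ'
    hΛgrad hΛ0 hHJ
end

section
/- Let F ∈ ℝ^{n×n} be Hurwitz, G ∈ ℝ^{n×m} with (F, G) controllable, and H ∈ ℝ^{p×n} with (F, H) observable, and let W_c = ∫₀^∞ exp(tF) G Gᵀ exp(tFᵀ) dt and W_o = ∫₀^∞ exp(tFᵀ) Hᵀ H exp(tF) dt. Then there exists an invertible matrix T ∈ ℝ^{n×n} and real numbers σ₁ ≥ σ₂ ≥ … ≥ σₙ > 0 such that T W_c Tᵀ = T^{-ᵀ} W_o T^{-1} = diag(σ₁, …, σₙ). That is, the transformed system (T F T^{-1}, T G, H T^{-1}) is balanced: its controllability and observability Gramians are equal and diagonal. -/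
open MeasureTheory Matrix

/-- A real square matrix is Hurwitz if every (complex) eigenvalue has negative real part. -/
def IsHurwitz {n : ℕ} (F : Matrix (Fin n) (Fin n) ℝ) : Prop :=
  ∀ μ ∈ spectrum ℂ (F.map (algebraMap ℝ ℂ)), μ.re < 0

/-- The controllability matrix `[G, FG, …, F^{n-1}G]` of the pair `(F, G)`. -/
def ctrbMatrix {n m : ℕ} (F : Matrix (Fin n) (Fin n) ℝ) (G : Matrix (Fin n) (Fin m) ℝ) :
    Matrix (Fin n) (Fin n × Fin m) ℝ :=
  Matrix.of fun i p => (F ^ (p.1 : ℕ) * G) i p.2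

/-- The pair `(F, G)` is controllable if the controllability matrix has full rank `n`. -/
def IsControllablePair {n m : ℕ} (F : Matrix (Fin n) (Fin n) ℝ)
    (G : Matrix (Fin n) (Fin m) ℝ) : Prop :=
  (ctrbMatrix F G).rank = n

/-- The pair `(F, H)` is observable if the unobservable subspace `∩_{k<n} ker (H Fᵏ)`
is trivial. -/
def IsObservablePair {n p : ℕ} (F : Matrix (Fin n) (Fin n) ℝ)
    (H : Matrix (Fin p) (Fin n) ℝ) : Prop :=
  ∀ x : Fin n → ℝ, (∀ k < n, (H * F ^ k) *ᵥ x = 0) → x = 0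

/-- The controllability Gramian `W_c = ∫₀^∞ exp(tF) G Gᵀ exp(tFᵀ) dt`, defined entrywise. -/
noncomputable def controllabilityGramian {n m : ℕ} (F : Matrix (Fin n) (Fin n) ℝ)
    (G : Matrix (Fin n) (Fin m) ℝ) : Matrix (Fin n) (Fin n) ℝ :=
  Matrix.of fun i j =>
    ∫ t in Set.Ioi (0 : ℝ), (NormedSpace.exp (t • F) * G * Gᵀ * NormedSpace.exp (t • Fᵀ)) i j

/-- The observability Gramian `W_o = ∫₀^∞ exp(tFᵀ) Hᵀ H exp(tF) dt`, defined entrywise. -/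
noncomputable def observabilityGramian {n p : ℕ} (F : Matrix (Fin n) (Fin n) ℝ)
    (H : Matrix (Fin p) (Fin n) ℝ) : Matrix (Fin n) (Fin n) ℝ :=
  Matrix.of fun i j =>
    ∫ t in Set.Ioi (0 : ℝ), (NormedSpace.exp (t • Fᵀ) * Hᵀ * H * NormedSpace.exp (t • F)) i j


/-!
Hurwitz stability makes `exp (t • F)` decay exponentially (on each generalized eigenspace it is
`e^{tμ}` times a polynomial in `t`), so both Gramian integrals converge, and
`xᵀ W_c x = ∫₀^∞ ‖Gᵀ exp (t • Fᵀ) x‖² dt`. If this vanishes, `Gᵀ exp (t • Fᵀ) x = 0` for all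
`t > 0`; differentiating and letting `t → 0⁺` gives `Gᵀ (Fᵀ)ᵏ x = 0` for every `k`, which
controllability forbids. Hence `W_c` and, dually, `W_o` are positive definite.

For positive definite `W_c, W_o`, factor `W_c = B Bᵀ`, diagonalize `Bᵀ W_o B = V D Vᵀ`
orthogonally with decreasing eigenvalues, and set `T = (B V D^{-1/4})⁻¹`; then
`T W_c Tᵀ = T⁻ᵀ W_o T⁻¹ = D^{1/2}`.
-/

open NormedSpace Asymptotics Filter Topology

theorem MeasureTheory.setIntegral_pos_of_continuous {X : Type*} [TopologicalSpace X]
    [MeasurableSpace X] {μ : Measure X} [μ.IsOpenPosMeasure] {f : X → ℝ} {s : Set X} {x : X}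
    (hs : IsOpen s) (hf : Continuous f) (hfi : IntegrableOn f s μ) (hnn : ∀ y, 0 ≤ f y)
    (hx : x ∈ s) (hfx : f x ≠ 0) : 0 < ∫ y in s, f y ∂μ :=
  (setIntegral_pos_iff_support_of_nonneg_ae (ae_of_all _ hnn) hfi).2
    ((hf.isOpen_support.inter hs).measure_pos μ ⟨x, hfx, hx⟩)

section QuadraticForm

open Finset

variable {ι X : Type*} [Fintype ι] [MeasurableSpace X] {μ : Measure X} {M : X → Matrix ι ι ℝ}

theorem MeasureTheory.Integrable.dotProduct_mulVec (hM : ∀ i j, Integrable (fun t => M t i j) μ)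
    (x : ι → ℝ) : Integrable (fun t => x ⬝ᵥ (M t *ᵥ x)) μ := by
  simp only [dotProduct, mulVec, mul_sum]
  exact integrable_finsetSum _ fun i _ => integrable_finsetSum _ fun j _ =>
    ((hM i j).mul_const (x j)).const_mul (x i)

theorem MeasureTheory.dotProduct_integral_mulVec (hM : ∀ i j, Integrable (fun t => M t i j) μ)
    (x : ι → ℝ) :
    x ⬝ᵥ ((Matrix.of fun i j => ∫ t, M t i j ∂μ) *ᵥ x) = ∫ t, x ⬝ᵥ (M t *ᵥ x) ∂μ := by
  have hint (i j : ι) : Integrable (fun t => x i * (M t i j * x j)) μ :=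
    ((hM i j).mul_const (x j)).const_mul (x i)
  simp only [dotProduct, mulVec, of_apply, mul_sum]
  rw [integral_finsetSum _ fun i _ => integrable_finsetSum _ fun j _ => hint i j]
  refine sum_congr rfl fun i _ => ?_
  rw [integral_finsetSum _ fun j _ => hint i j]
  simp only [integral_const_mul, integral_mul_const]

theorem Matrix.dotProduct_transpose_mul_self_mulVec {κ : Type*} [Fintype κ]
    (A : Matrix κ ι ℝ) (x : ι → ℝ) : x ⬝ᵥ ((Aᵀ * A) *ᵥ x) = (A *ᵥ x) ⬝ᵥ (A *ᵥ x) := by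
  rw [← mulVec_mulVec, dotProduct_mulVec, vecMul_transpose]

end QuadraticForm

section Derivative

variable {𝔸 E : Type*} [NormedRing 𝔸] [NormedAlgebra ℝ 𝔸] [CompleteSpace 𝔸]
  [NormedAddCommGroup E] [NormedSpace ℝ E] {a : 𝔸} {L : 𝔸 →L[ℝ] E}

theorem ContinuousLinearMap.map_exp_smul_mul_eq_zero (h : ∀ t : ℝ, 0 < t → L (exp (t • a)) = 0)
    {t : ℝ} (ht : 0 < t) : L (exp (t • a) * a) = 0 := by
  have hderiv : HasDerivAt (fun s : ℝ => L (exp (s • a))) (L (exp (t • a) * a)) t :=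
    L.hasFDerivAt.comp_hasDerivAt t (hasDerivAt_exp_smul_const a t)
  have hzero : (fun s : ℝ => L (exp (s • a))) =ᶠ[𝓝 t] fun _ => 0 :=
    eventually_of_mem (Ioi_mem_nhds ht) fun s hs => h s hs
  exact hderiv.unique ((hasDerivAt_const t 0).congr_of_eventuallyEq hzero)

theorem ContinuousLinearMap.map_pow_eq_zero_of_forall_exp_smul
    (h : ∀ t : ℝ, 0 < t → L (exp (t • a)) = 0) (k : ℕ) : L (a ^ k) = 0 := by
  have hk : ∀ t : ℝ, 0 < t → L (exp (t • a) * a ^ k) = 0 := by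
    induction k with
    | zero => simpa using h
    | succ k ih =>
      intro t ht
      have := map_exp_smul_mul_eq_zero (L := L.comp ((ContinuousLinearMap.mul ℝ 𝔸).flip (a ^ k)))
        (fun s hs => by simpa using ih s hs) ht
      simpa [pow_succ', ← mul_assoc] using this
  have hcont : ContinuousAt (fun t : ℝ => L (exp (t • a) * a ^ k)) 0 :=
    L.continuous.continuousAt.comp
      ((hasDerivAt_exp_smul_const a (0 : ℝ)).continuousAt.mul continuousAt_const)
  have hlim : Tendsto (fun t : ℝ => L (exp (t • a) * a ^ k)) (𝓝[>] 0) (𝓝 0) :=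
    tendsto_const_nhds.congr' (eventually_nhdsWithin_of_forall fun t ht => (hk t ht).symm)
  simpa using tendsto_nhds_unique (hcont.tendsto.mono_left nhdsWithin_le_nhds) hlim

end Derivative

theorem Complex.isBigO_pow_mul_exp_of_re_lt {μ : ℂ} {β : ℝ} (hμ : μ.re < -β) (j : ℕ) :
    (fun t : ℝ => (t : ℂ) ^ j * Complex.exp (t * μ)) =O[atTop] fun t => Real.exp (-β * t) := by
  have hlo : (fun t : ℝ => t ^ j * Real.exp (μ.re * t)) =o[atTop] fun t => Real.exp (-β * t) := by
    have := (isLittleO_pow_exp_pos_mul_atTop j (by linarith : 0 < -β - μ.re)).mul_isBigO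
      (isBigO_refl (fun t : ℝ => Real.exp (μ.re * t)) atTop)
    refine this.congr_right fun t => ?_
    rw [← Real.exp_add]
    ring_nf
  refine (IsBigO.of_norm_eventuallyLE ?_).trans hlo.isBigO
  filter_upwards [eventually_ge_atTop 0] with t ht
  simp [norm_exp, abs_of_nonneg ht, mul_comm]

section MatrixExponential

open Finset

attribute [local instance] Matrix.linftyOpNormedAddCommGroup Matrix.linftyOpNormedRing
  Matrix.linftyOpNormedAlgebra

variable {ι : Type*} [Fintype ι] [DecidableEq ι]

theorem Matrix.exp_mulVec_eq_sum_of_pow_mulVec_eq_zero {𝕂 : Type*} [RCLike 𝕂]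
    {N : Matrix ι ι 𝕂} {v : ι → 𝕂} {k : ℕ} (hv : N ^ k *ᵥ v = 0) :
    exp N *ᵥ v = ∑ j ∈ range k, (j.factorial : 𝕂)⁻¹ • (N ^ j *ᵥ v) := by
  have hsum := (exp_series_hasSum_exp' (𝕂 := 𝕂) N).map (mulVec.addMonoidHomLeft v)
    (continuous_id.matrix_mulVec continuous_const)
  refine (hsum.unique (hasSum_sum_of_ne_finset_zero (s := range k) fun j hj => ?_)).trans ?_
  · rw [mem_range, not_lt] at hj
    simp [mulVec.addMonoidHomLeft, smul_mulVec, ← pow_sub_mul_pow N hj, ← mulVec_mulVec, hv]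
  · simp [mulVec.addMonoidHomLeft, smul_mulVec]

theorem Matrix.exp_smul_mulVec_isBigO_of_pow_sub_mulVec_eq_zero {B : Matrix ι ι ℂ} {μ : ℂ}
    {β : ℝ} (hμ : μ.re < -β) {v : ι → ℂ} {k : ℕ} (hv : (B - μ • 1) ^ k *ᵥ v = 0) :
    (fun t : ℝ => exp (t • B) *ᵥ v) =O[atTop] fun t => Real.exp (-β * t) := by
  set N := B - μ • 1
  have hexp (t : ℝ) : exp (t • B) *ᵥ v = ∑ j ∈ range k,
      ((t : ℂ) ^ j * Complex.exp (t * μ)) • ((j.factorial : ℂ)⁻¹ • (N ^ j *ᵥ v)) := by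
    have hsplit : t • B = algebraMap ℂ _ ((t : ℂ) * μ) + (t : ℂ) • N := by
      rw [Algebra.algebraMap_eq_smul_one, smul_sub, smul_smul, add_sub_cancel,
        ← algebraMap_smul ℂ t B, Complex.coe_algebraMap]
    have hv' : ((t : ℂ) • N) ^ k *ᵥ v = 0 := by rw [smul_pow, smul_mulVec, hv, smul_zero]
    rw [hsplit, Matrix.exp_add_of_commute _ _ (Algebra.commute_algebraMap_left _ _)]
    -- `linftyOpNormedAlgebra` agrees with `Matrix.instAlgebra` only up to unfolding
    erw [← algebraMap_exp_comm]
    rw [← Complex.exp_eq_exp_ℂ, ← mulVec_mulVec, exp_mulVec_eq_sum_of_pow_mulVec_eq_zero hv',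
      Algebra.algebraMap_eq_smul_one, smul_mulVec, one_mulVec, smul_sum]
    refine sum_congr rfl fun j _ => ?_
    simp only [smul_pow, smul_mulVec, smul_smul]
    ring_nf
  simp_rw [hexp]
  refine IsBigO.fun_sum fun j _ => isBigO_norm_left.1 ?_
  simpa only [norm_smul, mul_one] using
    (isBigO_norm_left.2 (Complex.isBigO_pow_mul_exp_of_re_lt hμ j)).mul
      (isBigO_const_const ‖(j.factorial : ℂ)⁻¹ • (N ^ j *ᵥ v)‖ one_ne_zero atTop)

theorem Matrix.exp_smul_mulVec_isBigO {B : Matrix ι ι ℂ} {β : ℝ}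
    (hB : ∀ μ ∈ spectrum ℂ B, μ.re < -β) (v : ι → ℂ) :
    (fun t : ℝ => exp (t • B) *ᵥ v) =O[atTop] fun t => Real.exp (-β * t) := by
  have hv : v ∈ ⨆ μ, Module.End.maxGenEigenspace (toLin' B) μ := by
    rw [Module.End.iSup_maxGenEigenspace_eq_top]
    trivial
  refine Submodule.iSup_induction _ (motive := fun x =>
    (fun t : ℝ => exp (t • B) *ᵥ x) =O[atTop] fun t => Real.exp (-β * t)) hv ?_ ?_ ?_
  · intro μ x hx
    rcases eq_or_ne x 0 with rfl | hx0
    · simpa only [mulVec_zero] using isBigO_zero _ _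
    have hμ : μ ∈ spectrum ℂ B := by
      rw [← spectrum_toLin']
      exact (Module.End.HasUnifEigenvector.hasUnifEigenvalue ⟨hx, hx0⟩).lt zero_lt_one
        |>.mem_spectrum
    obtain ⟨k, hk⟩ := (Module.End.mem_maxGenEigenspace _ μ x).mp hx
    refine exp_smul_mulVec_isBigO_of_pow_sub_mulVec_eq_zero (hB μ hμ) (k := k) ?_
    rwa [← toLin'_apply, toLin'_pow, map_sub, map_smul, toLin'_one]
  · simpa only [mulVec_zero] using isBigO_zero _ _
  · intro x y hx hy
    simpa [mulVec_add] using hx.add hy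

theorem Matrix.map_exp_smul (t : ℝ) (F : Matrix ι ι ℝ) :
    (exp (t • F)).map (algebraMap ℝ ℂ) = exp (t • F.map (algebraMap ℝ ℂ)) := by
  refine (map_exp (RingHom.mapMatrix (algebraMap ℝ ℂ) : Matrix ι ι ℝ →+* _)
    (continuous_id.matrix_map (continuous_algebraMap ℝ ℂ)) (t • F)).trans (congrArg exp ?_)
  ext i j
  simp

theorem Matrix.exp_smul_transpose (t : ℝ) (F : Matrix ι ι ℝ) :
    exp (t • Fᵀ) = (exp (t • F))ᵀ := by
  rw [← transpose_smul, exp_transpose]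

theorem Matrix.continuous_exp_smul (F : Matrix ι ι ℝ) : Continuous fun t : ℝ => exp (t • F) :=
  exp_continuous.comp (continuous_id.smul continuous_const)

end MatrixExponential

section Gramian

open Finset

attribute [local instance] Matrix.linftyOpNormedAddCommGroup Matrix.linftyOpNormedRing
  Matrix.linftyOpNormedAlgebra

variable {n m p : ℕ} {F : Matrix (Fin n) (Fin n) ℝ}

theorem Matrix.spectrum_transpose {ι R : Type*} [Fintype ι] [DecidableEq ι] [CommRing R]
    (B : Matrix ι ι R) : spectrum R Bᵀ = spectrum R B := by
  ext μ
  have : algebraMap R _ μ - Bᵀ = (algebraMap R _ μ - B)ᵀ := by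
    rw [transpose_sub, algebraMap_eq_diagonal, diagonal_transpose]
  rw [spectrum.mem_iff, spectrum.mem_iff, this, isUnit_iff_isUnit_det, det_transpose,
    ← isUnit_iff_isUnit_det]

theorem IsHurwitz.transpose (hF : IsHurwitz F) : IsHurwitz Fᵀ := by
  intro μ hμ
  rw [transpose_map, spectrum_transpose] at hμ
  exact hF μ hμ

theorem IsHurwitz.exists_pos_forall_re_lt (hF : IsHurwitz F) :
    ∃ β > 0, ∀ μ ∈ spectrum ℂ (F.map (algebraMap ℝ ℂ)), μ.re < -β := by
  set S := spectrum ℂ (F.map (algebraMap ℝ ℂ))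
  rcases S.eq_empty_or_nonempty with hS | hS
  · exact ⟨1, one_pos, by simp [hS]⟩
  obtain ⟨μ₀, hμ₀, hmax⟩ := Set.exists_max_image S Complex.re (Matrix.finite_spectrum _) hS
  have := hF μ₀ hμ₀
  exact ⟨-μ₀.re / 2, by linarith, fun μ hμ => by linarith [hmax μ hμ]⟩

theorem IsHurwitz.exp_smul_apply_isBigO (hF : IsHurwitz F) :
    ∃ β > 0, ∀ i j, (fun t : ℝ => exp (t • F) i j) =O[atTop] fun t => Real.exp (-β * t) := by
  obtain ⟨β, hβ, hre⟩ := hF.exists_pos_forall_re_lt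
  refine ⟨β, hβ, fun i j => ?_⟩
  have hcol := isBigO_pi.1 (exp_smul_mulVec_isBigO hre (Pi.single j 1)) i
  refine isBigO_norm_left.1 (hcol.norm_left.congr_left fun t => ?_)
  rw [mulVec_single_one, ← map_exp_smul]
  simp

theorem IsHurwitz.integrableOn_gramian_integrand (hF : IsHurwitz F)
    (G : Matrix (Fin n) (Fin m) ℝ) (i j : Fin n) :
    IntegrableOn (fun t : ℝ => (exp (t • F) * G * Gᵀ * exp (t • Fᵀ)) i j) (Set.Ioi 0) := by
  obtain ⟨β, hβ, hexp⟩ := hF.exp_smul_apply_isBigO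
  refine integrable_of_isBigO_exp_neg (b := 2 * β) (by positivity) ?_ ?_
  · exact ((continuous_apply j).comp ((continuous_apply i).comp
      ((((continuous_exp_smul F).matrix_mul continuous_const).matrix_mul
        continuous_const).matrix_mul (continuous_exp_smul Fᵀ)))).continuousOn
  set M := G * Gᵀ
  have hentry (t : ℝ) : (exp (t • F) * G * Gᵀ * exp (t • Fᵀ)) i j =
      ∑ l, (∑ k, M k l * exp (t • F) i k) * exp (t • F) j l := by
    simp [M, Matrix.mul_assoc, exp_smul_transpose, mul_apply, mul_comm]
  simp_rw [hentry]
  refine IsBigO.fun_sum fun l _ => ?_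
  refine ((IsBigO.fun_sum fun k _ => (hexp i k).const_mul_left (M k l)).mul (hexp j l)).congr_right
    fun t => ?_
  rw [← Real.exp_add]
  ring_nf

theorem controllabilityGramian_isHermitian (F : Matrix (Fin n) (Fin n) ℝ)
    (G : Matrix (Fin n) (Fin m) ℝ) : (controllabilityGramian F G).IsHermitian := by
  refine isHermitian_iff_isSymm.2 <| IsSymm.ext fun i j => ?_
  simp only [controllabilityGramian, of_apply]
  congr 1 with t
  have hM : (exp (t • F) * G * Gᵀ * exp (t • Fᵀ))ᵀ = exp (t • F) * G * Gᵀ * exp (t • Fᵀ) := by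
    simp [exp_smul_transpose, Matrix.mul_assoc]
  exact congrFun (congrFun hM i) j

theorem observabilityGramian_eq_controllabilityGramian_transpose (F : Matrix (Fin n) (Fin n) ℝ)
    (H : Matrix (Fin p) (Fin n) ℝ) : observabilityGramian F H = controllabilityGramian Fᵀ Hᵀ := by
  simp only [observabilityGramian, controllabilityGramian, transpose_transpose]

theorem IsControllablePair.vecMul_injective {G : Matrix (Fin n) (Fin m) ℝ}
    (h : IsControllablePair F G) : Function.Injective fun x => x ᵥ* ctrbMatrix F G := by
  refine vecMul_injective_iff.2 (linearIndependent_iff_card_eq_finrank_span.2 ?_)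
  rw [Fintype.card_fin, Set.finrank, ← rank_eq_finrank_span_row]
  exact h.symm

theorem IsControllablePair.isObservablePair_transpose {G : Matrix (Fin n) (Fin m) ℝ}
    (h : IsControllablePair F G) : IsObservablePair Fᵀ Gᵀ := by
  intro x hx
  refine h.vecMul_injective (funext fun ⟨k, j⟩ => ?_)
  have := congrFun (hx k k.2) j
  rw [← transpose_pow, ← transpose_mul, mulVec_transpose] at this
  simpa [ctrbMatrix, vecMul] using this

theorem IsObservablePair.exists_mul_exp_smul_mulVec_ne_zero {H : Matrix (Fin p) (Fin n) ℝ}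
    (h : IsObservablePair F H) {x : Fin n → ℝ} (hx : x ≠ 0) :
    ∃ t : ℝ, 0 < t ∧ (H * exp (t • F)) *ᵥ x ≠ 0 := by
  by_contra! hy
  let L : Matrix (Fin n) (Fin n) ℝ →L[ℝ] (Fin p → ℝ) :=
    LinearMap.toContinuousLinearMap (H.mulVecLin ∘ₗ (mulVecBilin ℝ ℝ).flip x)
  refine hx (h x fun k _ => ?_)
  have := L.map_pow_eq_zero_of_forall_exp_smul (a := F) (fun t ht => by
    change H *ᵥ (exp (t • F) *ᵥ x) = 0
    rw [mulVec_mulVec]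
    exact hy t ht) k
  change H *ᵥ (F ^ k *ᵥ x) = 0 at this
  rwa [mulVec_mulVec] at this

theorem IsHurwitz.controllabilityGramian_posDef (hF : IsHurwitz F) {G : Matrix (Fin n) (Fin m) ℝ}
    (hobs : IsObservablePair Fᵀ Gᵀ) : (controllabilityGramian F G).PosDef := by
  refine PosDef.of_dotProduct_mulVec_pos (controllabilityGramian_isHermitian F G) fun x hx => ?_
  obtain ⟨t₀, ht₀, hy⟩ := hobs.exists_mul_exp_smul_mulVec_ne_zero hx
  set y := fun t : ℝ => (Gᵀ * exp (t • Fᵀ)) *ᵥ x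
  set f := fun t : ℝ => x ⬝ᵥ ((exp (t • F) * G * Gᵀ * exp (t • Fᵀ)) *ᵥ x)
  have hfy (t : ℝ) : f t = y t ⬝ᵥ y t := by
    have hM : exp (t • F) * G * Gᵀ * exp (t • Fᵀ) = (Gᵀ * exp (t • Fᵀ))ᵀ * (Gᵀ * exp (t • Fᵀ)) := by
      simp [exp_smul_transpose, Matrix.mul_assoc]
    rw [← dotProduct_transpose_mul_self_mulVec, ← hM]
  have hcont : Continuous f := by
    have : Continuous y :=
      (continuous_const.matrix_mul (continuous_exp_smul Fᵀ)).matrix_mulVec continuous_const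
    simpa only [← hfy] using this.dotProduct this
  have hint := hF.integrableOn_gramian_integrand G
  rw [star_trivial, controllabilityGramian, dotProduct_integral_mulVec hint]
  refine setIntegral_pos_of_continuous isOpen_Ioi hcont (Integrable.dotProduct_mulVec hint x)
    (fun t => ?_) ht₀ ?_
  · change 0 ≤ f t
    rw [hfy]
    exact sum_nonneg fun i _ => mul_self_nonneg _
  · change f t₀ ≠ 0
    rwa [hfy, Ne, dotProduct_self_eq_zero]

theorem IsHurwitz.observabilityGramian_posDef (hF : IsHurwitz F) {H : Matrix (Fin p) (Fin n) ℝ}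
    (hobs : IsObservablePair F H) : (observabilityGramian F H).PosDef := by
  rw [observabilityGramian_eq_controllabilityGramian_transpose]
  exact hF.transpose.controllabilityGramian_posDef (by simpa only [transpose_transpose] using hobs)

end Gramian

section Balancing

variable {n : ℕ}

theorem Tuple.exists_perm_antitone {α : Type*} [LinearOrder α] (f : Fin n → α) :
    ∃ σ : Equiv.Perm (Fin n), Antitone (f ∘ σ) :=
  ⟨Fin.revPerm.trans (Tuple.sort f), fun _ _ hij => Tuple.monotone_sort f (Fin.rev_le_rev.2 hij)⟩

theorem Matrix.IsHermitian.exists_orthogonal_antitone_diagonal {M : Matrix (Fin n) (Fin n) ℝ}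
    (hM : M.IsHermitian) : ∃ V : Matrix (Fin n) (Fin n) ℝ, V * Vᵀ = 1 ∧
      ∃ d : Fin n → ℝ, Antitone d ∧ Vᵀ * M * V = diagonal d := by
  obtain ⟨e, he⟩ := Tuple.exists_perm_antitone hM.eigenvalues
  set U : Matrix (Fin n) (Fin n) ℝ := (hM.eigenvectorUnitary : Matrix (Fin n) (Fin n) ℝ)
  have hU : U * Uᵀ = 1 := by
    simpa [star_eq_conjTranspose] using Unitary.mul_star_self_of_mem hM.eigenvectorUnitary.2
  have hdiag : Uᵀ * M * U = diagonal hM.eigenvalues := by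
    simpa [star_eq_conjTranspose] using hM.conjStarAlgAut_star_eigenvectorUnitary
  refine ⟨U.submatrix id e, ?_, hM.eigenvalues ∘ e, he, ?_⟩
  · rw [transpose_submatrix, submatrix_mul_equiv, hU, submatrix_id_id]
  · rw [← submatrix_diagonal_equiv, ← hdiag]
    ext i j
    rfl

theorem Matrix.PosDef.exists_simultaneous_diagonalization {Wc Wo : Matrix (Fin n) (Fin n) ℝ}
    (hc : Wc.PosDef) (ho : Wo.PosDef) : ∃ P : Matrix (Fin n) (Fin n) ℝ, IsUnit P.det ∧
      P * Pᵀ = Wc ∧ ∃ d : Fin n → ℝ, Antitone d ∧ (∀ i, 0 < d i) ∧ Pᵀ * Wo * P = diagonal d := by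
  open scoped MatrixOrder in
  obtain ⟨B, hB, rfl⟩ := CStarAlgebra.isStrictlyPositive_iff_eq_mul_star_self.mp
    hc.isStrictlyPositive
  have hM : (Bᵀ * Wo * B).PosDef := by
    simpa using ho.conjTranspose_mul_mul_same (mulVec_injective_iff_isUnit.2 hB)
  obtain ⟨V, hV, d, hd, hVd⟩ := hM.isHermitian.exists_orthogonal_antitone_diagonal
  have hVd' : (B * V)ᵀ * Wo * (B * V) = diagonal d := by
    simpa only [transpose_mul, Matrix.mul_assoc] using hVd
  have hdet : IsUnit (B * V).det := by
    rw [det_mul]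
    exact ((isUnit_iff_isUnit_det B).1 hB).mul (isUnit_det_of_right_inverse hV)
  refine ⟨B * V, hdet, ?_, d, hd, ?_, hVd'⟩
  · rw [transpose_mul, Matrix.mul_assoc, ← Matrix.mul_assoc V, hV, Matrix.one_mul,
      star_eq_conjTranspose, conjTranspose_eq_transpose_of_trivial]
  · rw [← posDef_diagonal_iff, ← hVd']
    simpa using ho.conjTranspose_mul_mul_same
      (mulVec_injective_iff_isUnit.2 ((isUnit_iff_isUnit_det _).2 hdet))

theorem Matrix.exists_congr_sqrt_diagonal {Wo P : Matrix (Fin n) (Fin n) ℝ} {d : Fin n → ℝ}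
    (hP : IsUnit P.det) (hpos : ∀ i, 0 < d i) (hPd : Pᵀ * Wo * P = diagonal d) :
    ∃ Q : Matrix (Fin n) (Fin n) ℝ, IsUnit Q.det ∧
      P * Pᵀ = Q * diagonal (fun i => √(d i)) * Qᵀ ∧
      Qᵀ * Wo * Q = diagonal (fun i => √(d i)) := by
  set σ : Fin n → ℝ := fun i => √(d i)
  have hσ (i : Fin n) : 0 < σ i := Real.sqrt_pos.2 (hpos i)
  set r : Fin n → ℝ := fun i => (√(σ i))⁻¹
  have hr (i : Fin n) : r i * r i = (σ i)⁻¹ := by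
    rw [← mul_inv, Real.mul_self_sqrt (hσ i).le]
  refine ⟨P * diagonal r, ?_, ?_, ?_⟩
  · rw [det_mul, det_diagonal]
    exact hP.mul (isUnit_iff_ne_zero.2
      (Finset.prod_ne_zero_iff.2 fun i _ => inv_ne_zero (Real.sqrt_pos.2 (hσ i)).ne'))
  · have hrσr : diagonal r * diagonal σ * diagonal r = 1 := by
      rw [diagonal_mul_diagonal, diagonal_mul_diagonal, ← diagonal_one]
      congr 1 with i
      rw [mul_right_comm, hr, inv_mul_cancel₀ (hσ i).ne']
    calc P * Pᵀ = P * (diagonal r * diagonal σ * diagonal r) * Pᵀ := by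
          rw [hrσr, Matrix.mul_one]
      _ = P * diagonal r * diagonal σ * (P * diagonal r)ᵀ := by
          simp only [transpose_mul, diagonal_transpose, Matrix.mul_assoc]
  · calc (P * diagonal r)ᵀ * Wo * (P * diagonal r) = diagonal r * (Pᵀ * Wo * P) * diagonal r := by
          simp only [transpose_mul, diagonal_transpose, Matrix.mul_assoc]
      _ = diagonal σ := by
          rw [hPd, diagonal_mul_diagonal, diagonal_mul_diagonal]
          congr 1 with i
          have hdσ : d i = σ i * σ i := (Real.mul_self_sqrt (hpos i).le).symm
          rw [mul_right_comm, hr, hdσ, inv_mul_cancel_left₀ (hσ i).ne']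

theorem Matrix.PosDef.exists_balancing {Wc Wo : Matrix (Fin n) (Fin n) ℝ}
    (hc : Wc.PosDef) (ho : Wo.PosDef) : ∃ T : Matrix (Fin n) (Fin n) ℝ, IsUnit T.det ∧
      ∃ σ : Fin n → ℝ, Antitone σ ∧ (∀ i, 0 < σ i) ∧
        T * Wc * Tᵀ = diagonal σ ∧ (T⁻¹)ᵀ * Wo * T⁻¹ = diagonal σ := by
  obtain ⟨P, hP, rfl, d, hd, hpos, hPd⟩ := hc.exists_simultaneous_diagonalization ho
  obtain ⟨Q, hQ, hWc, hWo⟩ := exists_congr_sqrt_diagonal hP hpos hPd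
  refine ⟨Q⁻¹, isUnit_nonsing_inv_det Q hQ, fun i => √(d i),
    fun i j hij => Real.sqrt_le_sqrt (hd hij), fun i => Real.sqrt_pos.2 (hpos i), ?_, ?_⟩
  · rw [hWc, transpose_nonsing_inv, Matrix.mul_assoc, Matrix.mul_assoc,
      mul_nonsing_inv _ (isUnit_det_transpose Q hQ), Matrix.mul_one,
      nonsing_inv_mul_cancel_left _ _ hQ]
  · rw [nonsing_inv_nonsing_inv Q hQ, hWo]

end Balancing

/-- Existence of a balancing transformation: for a Hurwitz `F` with `(F, G)` controllable and
`(F, H)` observable, there is an invertible `T` and `σ₁ ≥ … ≥ σₙ > 0` with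
`T W_c Tᵀ = T⁻ᵀ W_o T⁻¹ = diag(σ₁, …, σₙ)`. -/
theorem exists_balancing_transformation {n m p : ℕ}
    (F : Matrix (Fin n) (Fin n) ℝ) (G : Matrix (Fin n) (Fin m) ℝ) (H : Matrix (Fin p) (Fin n) ℝ)
    (hF : IsHurwitz F) (hFG : IsControllablePair F G) (hFH : IsObservablePair F H) :
    ∃ T : Matrix (Fin n) (Fin n) ℝ, IsUnit T.det ∧
      ∃ σ : Fin n → ℝ, Antitone σ ∧ (∀ i, 0 < σ i) ∧
        T * controllabilityGramian F G * Tᵀ = Matrix.diagonal σ ∧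
        (T⁻¹)ᵀ * observabilityGramian F H * T⁻¹ = Matrix.diagonal σ :=
  (hF.controllabilityGramian_posDef hFG.isObservablePair_transpose).exists_balancing
    (hF.observabilityGramian_posDef hFH)
end
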